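/- arXiv:1010.1784 — 2 statements merged into one kernel-verified Lean document; each statement's English description precedes it below -/
import Mathlib

section
/- For integers n ≥ 3 and m ≥ 2, the set S = {v₁₁, v₁ₘ, vₙₘ} consisting of three corner vertices of the grid Pₙ × Pₘ is a resolving set for the graph (Pₙ × Pₘ) ⊙ K₁, where v_{ij} denotes the vertex (v_i, u_j) of the grid. -/
open SimpleGraph

/-- Corona `G ⊙ K₁`: attach to each vertex `v` (as `Sum.inl v`) a pendant vertex `Sum.inr v`. -/
def corona {V : Type*} (G : SimpleGraph V) : SimpleGraph (V ⊕ V) :=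
  SimpleGraph.fromRel (fun a b =>
    match a, b with
    | Sum.inl x, Sum.inl y => G.Adj x y
    | Sum.inl x, Sum.inr y => x = y
    | _, _ => False)

/-- `S` is a resolving set for `G`: distinct vertices have distinct distance vectors to `S`. -/
def IsResolving {V : Type*} (G : SimpleGraph V) (S : Set V) : Prop :=
  ∀ u v : V, (∀ s ∈ S, G.dist u s = G.dist v s) → u = v

/-- Metric dimension: minimum cardinality of a resolving set. -/
noncomputable def metricDim {V : Type*} [Fintype V] (G : SimpleGraph V) : ℕ :=
  sInf {k | ∃ S : Finset V, S.card = k ∧ IsResolving G (↑S : Set V)}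

/-!
In the corona of the grid, the distance from `v_ij` to a grid vertex `v_pq` is the taxicab
distance `|i - p| + |j - q|`, and from the pendant `u_ij` it is one more. The lower bounds come
from mapping the corona homomorphically into `G □ K₂`, pendants on the second layer, where
distances add up by `edist_boxProd`. Against the three corners, the first two distances differ
by `2j - (m - 1)` and the last two by `2i - (n - 1)`, so they recover `i`, `j` and the layer.
-/

namespace SimpleGraph

variable {V W : Type*} {G : SimpleGraph V} {G' : SimpleGraph W}

theorem Hom.edist_le (f : G →g G') (u v : V) : G'.edist (f u) (f v) ≤ G.edist u v := by
  by_cases hr : G.Reachable u v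
  · obtain ⟨p, hp⟩ := hr.exists_walk_length_eq_edist
    rw [← hp, ← p.length_map f]
    exact SimpleGraph.edist_le _
  · exact edist_eq_top_of_not_reachable hr ▸ le_top

theorem natAbs_sub_le_length_of_walk_pathGraph {n : ℕ} {i j : Fin n}
    (p : (pathGraph n).Walk i j) : ((i : ℤ) - j).natAbs ≤ p.length := by
  induction p with
  | nil => simp
  | cons h p ih =>
    rw [pathGraph_adj] at h
    rw [Walk.length_cons]
    omega

theorem edist_pathGraph_le {n : ℕ} (d : ℕ) :
    ∀ i j : Fin n, (j : ℕ) = i + d → (pathGraph n).edist i j ≤ d := by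
  induction d with
  | zero =>
    intro i j h
    have hji : j = i := Fin.ext (by omega)
    simp [hji]
  | succ d ih =>
    intro i j h
    let k : Fin n := ⟨j - 1, by omega⟩
    have hkj : (pathGraph n).Adj k j := pathGraph_adj.mpr (.inl (by simp [k]; omega))
    calc (pathGraph n).edist i j ≤ (pathGraph n).edist i k + (pathGraph n).edist k j :=
          SimpleGraph.edist_triangle
      _ ≤ d + 1 := add_le_add (ih i k (by simp [k]; omega)) (edist_eq_one_iff_adj.mpr hkj).le
      _ = ↑(d + 1) := by push_cast; rfl

theorem edist_pathGraph {n : ℕ} (i j : Fin n) :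
    (pathGraph n).edist i j = ((i : ℤ) - j).natAbs := by
  apply le_antisymm
  · rcases le_total i j with hij | hji
    · exact (edist_pathGraph_le (j - i) i j (by omega)).trans_eq (by congr 1; omega)
    · rw [edist_comm]
      exact (edist_pathGraph_le (i - j) j i (by omega)).trans_eq (by congr 1; omega)
  · obtain ⟨p, hp⟩ := (pathGraph_preconnected n i j).exists_walk_length_eq_edist
    rw [← hp]
    exact_mod_cast natAbs_sub_le_length_of_walk_pathGraph p

theorem dist_pathGraph_boxProd_pathGraph {n m : ℕ} (x y : Fin n × Fin m) :
    (pathGraph n □ pathGraph m).dist x y =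
      ((x.1 : ℤ) - y.1).natAbs + ((x.2 : ℤ) - y.2).natAbs := by
  rw [dist, edist_boxProd, edist_pathGraph, edist_pathGraph]
  norm_cast

end SimpleGraph

section corona

variable {V : Type*} {G : SimpleGraph V}

theorem corona_adj_inl_inl {x y : V} : (corona G).Adj (.inl x) (.inl y) ↔ G.Adj x y := by
  simp only [corona, fromRel_adj, ne_eq, Sum.inl.injEq]
  exact ⟨fun ⟨_, h⟩ => h.elim id fun h => h.symm, fun h => ⟨G.ne_of_adj h, .inl h⟩⟩

theorem corona_adj_inr_inl {x y : V} : (corona G).Adj (.inr x) (.inl y) ↔ x = y := by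
  simp [corona, fromRel_adj, eq_comm]

def inlHomCorona : G →g corona G := ⟨Sum.inl, corona_adj_inl_inl.mpr⟩

def coronaHomBoxProd : corona G →g G □ pathGraph 2 where
  toFun := Sum.elim (fun x => (x, 0)) (fun x => (x, 1))
  map_rel' := by
    rintro (x | x) (y | y) h
    · simpa [corona_adj_inl_inl] using h
    · simp [corona, fromRel_adj] at h
      simp [h, pathGraph_two_eq_top]
    · rw [corona_adj_inr_inl] at h
      simp [h, pathGraph_two_eq_top]
    · simp [corona, fromRel_adj] at h

theorem edist_corona_inl_inl (x y : V) : (corona G).edist (.inl x) (.inl y) = G.edist x y := by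
  refine le_antisymm (inlHomCorona.edist_le x y) ?_
  simpa [coronaHomBoxProd, edist_boxProd] using coronaHomBoxProd.edist_le (.inl x) (.inl y)

theorem edist_corona_inr_inl (x y : V) :
    (corona G).edist (.inr x) (.inl y) = G.edist x y + 1 := by
  refine le_antisymm ?_ ?_
  · calc (corona G).edist (.inr x) (.inl y)
        ≤ (corona G).edist (.inr x) (.inl x) + (corona G).edist (.inl x) (.inl y) :=
          SimpleGraph.edist_triangle
      _ = G.edist x y + 1 := by
          rw [edist_eq_one_iff_adj.mpr (corona_adj_inr_inl.mpr rfl), edist_corona_inl_inl, add_comm]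
  · simpa [coronaHomBoxProd, edist_boxProd, edist_pathGraph] using
      coronaHomBoxProd.edist_le (.inr x) (.inl y)

theorem dist_corona_inl_inl (x y : V) : (corona G).dist (.inl x) (.inl y) = G.dist x y := by
  simp only [SimpleGraph.dist, edist_corona_inl_inl]

theorem dist_corona_inr_inl {x y : V} (h : G.Reachable x y) :
    (corona G).dist (.inr x) (.inl y) = G.dist x y + 1 := by
  rw [SimpleGraph.dist, edist_corona_inr_inl, ← h.coe_dist_eq_edist]
  norm_cast

end corona

theorem stmt_1 (n m : ℕ) (hn : 3 ≤ n) (hm : 2 ≤ m) :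
    IsResolving (corona (pathGraph n □ pathGraph m))
      {Sum.inl ((⟨0, by omega⟩ : Fin n), (⟨0, by omega⟩ : Fin m)),
       Sum.inl ((⟨0, by omega⟩ : Fin n), (⟨m - 1, by omega⟩ : Fin m)),
       Sum.inl ((⟨n - 1, by omega⟩ : Fin n), (⟨m - 1, by omega⟩ : Fin m))} := by
  have hreach (x y : Fin n × Fin m) : (pathGraph n □ pathGraph m).Reachable x y :=
    (pathGraph_preconnected n).boxProd (pathGraph_preconnected m) x y
  intro u v h
  have h₁ := h _ (Set.mem_insert _ _)
  have h₂ := h _ (Set.mem_insert_of_mem _ (Set.mem_insert _ _))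
  have h₃ := h _ (Set.mem_insert_of_mem _ (Set.mem_insert_of_mem _ rfl))
  rcases u with ⟨i, j⟩ | ⟨i, j⟩ <;> rcases v with ⟨i', j'⟩ | ⟨i', j'⟩ <;>
    simp only [dist_corona_inl_inl, dist_corona_inr_inl (hreach _ _),
      dist_pathGraph_boxProd_pathGraph] at h₁ h₂ h₃ <;>
    simp only [Sum.inl.injEq, Sum.inr.injEq, reduceCtorEq, Prod.ext_iff, Fin.ext_iff] <;>
    omega
end

section
/- For n ≥ 3 and m ≥ 1, the metric dimension of the Cartesian product Kₙ × Pₘ equals n − 1. -/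
open SimpleGraph

/-!
Distances in `Kₙ □ H` split as `d((a, z), (b, r)) = [a ≠ b] + d_H(z, r)`.
If two first coordinates `a ≠ b` both miss the first projection of `S`, then `(a, z)` and `(b, z)`
are equidistant from every point of `S`; so a resolving set projects onto all but at most one
vertex of `Kₙ` and has at least `n - 1` elements.
Conversely, let `z` be an end of the path, so that `d_H(·, z)` is injective, and take the `n - 1`
vertices `(w, z)` with `w ≠ x`. Given a vertex `(u, t)`, as `n ≥ 3` some such `w` differs from
`u`, and its distance `1 + d_H(t, z)` to `(u, t)` determines `t`; then `u` is the only `w` at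
distance `d_H(t, z)`, or `u = x` if there is none.
-/

open Finset

lemma metricDim_eq_card {V : Type*} [Fintype V] {G : SimpleGraph V} {S : Finset V}
    (hS : IsResolving G S) (hmin : ∀ T : Finset V, IsResolving G T → S.card ≤ T.card) :
    metricDim G = S.card :=
  le_antisymm (Nat.sInf_le ⟨S, rfl, hS⟩)
    (le_csInf ⟨_, S, rfl, hS⟩ fun _ ⟨T, hT, hTres⟩ => hT ▸ hmin T hTres)

namespace SimpleGraph

lemma dist_boxProd_of_reachable {α β : Type*} {G : SimpleGraph α} {H : SimpleGraph β}
    {x y : α × β} (hG : G.Reachable x.1 y.1) (hH : H.Reachable x.2 y.2) :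
    (G □ H).dist x y = G.dist x.1 y.1 + H.dist x.2 y.2 := by
  rw [dist, dist, dist, edist_boxProd, ENat.toNat_add (edist_ne_top_iff_reachable.mpr hG)
    (edist_ne_top_iff_reachable.mpr hH)]

lemma pathGraph_dist_le_length {n : ℕ} {a b : Fin n} (p : (pathGraph n).Walk a b) :
    Nat.dist a b ≤ p.length := by
  induction p with
  | nil => simp
  | cons h _ ih =>
    rw [pathGraph_adj] at h
    unfold Nat.dist at *
    rw [Walk.length_cons]
    omega

lemma pathGraph_dist_add_le {n : ℕ} (a : Fin n) : ∀ (k : ℕ) (h : a + k < n),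
    (pathGraph n).dist a ⟨a + k, h⟩ ≤ k
  | 0, _ => by simp
  | k + 1, h => by
    have hadj : (pathGraph n).Adj ⟨a + k, by omega⟩ ⟨a + (k + 1), h⟩ := by
      simp only [pathGraph_adj]; omega
    have htri := hadj.reachable.dist_triangle_right a
    rw [dist_eq_one_iff_adj.mpr hadj] at htri
    have hk := pathGraph_dist_add_le a k (by omega)
    omega

theorem pathGraph_dist {n : ℕ} (a b : Fin n) : (pathGraph n).dist a b = Nat.dist a b := by
  wlog hab : a ≤ b generalizing a b
  · rw [dist_comm, Nat.dist_comm, this b a (le_of_not_ge hab)]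
  obtain ⟨p, hp⟩ := (pathGraph_preconnected n a b).exists_walk_length_eq_dist
  refine le_antisymm ?_ (hp ▸ pathGraph_dist_le_length p)
  have hle := pathGraph_dist_add_le a (b - a) (by omega)
  simp only [Nat.add_sub_cancel' (Fin.le_def.mp hab), Fin.eta] at hle
  unfold Nat.dist
  omega

section CompleteBoxProd

variable {V β : Type*} [DecidableEq V] {H : SimpleGraph β}

lemma dist_top_boxProd (hH : H.Connected) (a b : V) (z r : β) :
    ((⊤ : SimpleGraph V) □ H).dist (a, z) (b, r) = (if a = b then 0 else 1) + H.dist z r := by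
  rw [dist_boxProd_of_reachable reachable_top (hH.preconnected z r), dist_top]

theorem isResolving_top_boxProd [Fintype V] (hV : 3 ≤ Fintype.card V) (hH : H.Connected) {z : β}
    (hz : Function.Injective (H.dist · z)) (x : V) :
    IsResolving ((⊤ : SimpleGraph V) □ H) ↑((univ.erase x) ×ˢ {z}) := by
  rintro ⟨u, t⟩ ⟨v, s⟩ h
  have key (w : V) (hw : w ≠ x) :
      (if u = w then 0 else 1) + H.dist t z = (if v = w then 0 else 1) + H.dist s z := by
    simpa [dist_top_boxProd hH] using h (w, z) (by simp [hw])
  have avoid (y : V) : ∃ w, w ≠ x ∧ w ≠ y := by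
    have hcard : 1 < (univ.erase x).card := by
      rw [card_erase_of_mem (mem_univ x), card_univ]; omega
    obtain ⟨w, hw, hwy⟩ := exists_mem_ne hcard y
    exact ⟨w, ne_of_mem_erase hw, hwy⟩
  have hts : H.dist t z = H.dist s z := by
    obtain ⟨w, hwx, hwu⟩ := avoid u
    obtain ⟨w', hw'x, hw'v⟩ := avoid v
    have hw := key w hwx
    have hw' := key w' hw'x
    grind
  have huv : u = v := by
    by_cases hu : u = x
    · by_cases hv : v = x
      · rw [hu, hv]
      · simpa [hts] using key v hv
    · simpa [hts, eq_comm] using key u hu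
  rw [huv, hz hts]

theorem card_sub_one_le_card_of_isResolving_top_boxProd [Fintype V] (hH : H.Connected)
    {S : Finset (V × β)} (hS : IsResolving ((⊤ : SimpleGraph V) □ H) ↑S) :
    Fintype.card V - 1 ≤ S.card := by
  by_contra! hlt
  have hcard : 1 < (univ \ S.image Prod.fst).card := by
    have := card_image_le (s := S) (f := Prod.fst)
    rw [card_sdiff_of_subset (subset_univ _), card_univ]
    omega
  obtain ⟨a, ha, b, hb, hab⟩ := one_lt_card.mp hcard
  obtain ⟨z⟩ := hH.nonempty
  refine hab (congrArg Prod.fst (hS (a, z) (b, z) ?_))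
  rintro ⟨w, r⟩ hw
  have hwS : w ∈ S.image Prod.fst := mem_image_of_mem Prod.fst hw
  rw [dist_top_boxProd hH, dist_top_boxProd hH, if_neg, if_neg]
  · rintro rfl; exact (mem_sdiff.mp hb).2 hwS
  · rintro rfl; exact (mem_sdiff.mp ha).2 hwS

end CompleteBoxProd

end SimpleGraph

theorem stmt_9 (n m : ℕ) (hn : 3 ≤ n) (hm : 1 ≤ m) :
    metricDim ((⊤ : SimpleGraph (Fin n)) □ pathGraph m) = n - 1 := by
  obtain ⟨m, rfl⟩ : ∃ k, m = k + 1 := ⟨m - 1, by omega⟩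
  have hP := pathGraph_connected m
  have hinj : Function.Injective ((pathGraph (m + 1)).dist · 0) := fun t s h => by
    simpa [pathGraph_dist, Nat.dist_zero_right, Fin.val_inj] using h
  have hres := isResolving_top_boxProd (V := Fin n) (by simpa using hn) hP hinj ⟨0, by omega⟩
  have hcard :
      ((univ.erase ⟨0, by omega⟩) ×ˢ {0} : Finset (Fin n × Fin (m + 1))).card = n - 1 := by
    simp
  rw [← hcard, metricDim_eq_card hres]
  intro T hT
  simpa [hcard] using card_sub_one_le_card_of_isResolving_top_boxProd hP hT
end
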